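/- Let (R,m) be a Noetherian local ring, n ≥ 2, J = (f_1,...,f_n) a reduction of I = (f_1,...,f_n,f), and suppose rt(I) = L. Then f^L ∈ J·I^{L-1}, i.e., rn_J(I) ≤ L - 1. (Derivation: E(I)_d = 0 for d ≥ L+1 forces (J·I^{d-1} : f^d) = (J·I^{d-2} : f^{d-1}) for all d ≥ L+1, and since J is a reduction of I, (J·I^{m-1} : f^m) = R for m large, so (J·I^{L-1} : f^L) = R.) -/

import Mathlib

/-!
Write `z = (g, f)`. If `E(I)_d = 0`, a relation `f ^ d = ∑ bⱼ gⱼ` with `bⱼ ∈ I ^ (d - 1)` is a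
Koszul cycle `(b, -f ^ (d - 1))` of degree `d`, hence a boundary, and the last coordinate of a
boundary lies in `J I ^ (d - 2)`. So `f ^ d ∈ J I ^ (d - 1)` descends to
`f ^ (d - 1) ∈ J I ^ (d - 2)` for every `d > L`. As `J` is a reduction,
`f ^ d ∈ I ^ d = J I ^ (d - 1)` for large `d`, and descending to `d = L` gives the claim.

This needs the relation type to be finite (otherwise `relationTypeKoszul` is `sInf ∅ = 0`),
which is where the noetherian hypothesis enters: the homogeneous kernel of `R[X] → R[It]`,
`Xⱼ ↦ zⱼ t`, is generated in bounded degree, and above that degree a Koszul cycle of `z` lifts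
to a syzygy of the variables `X`, which is a combination of Koszul relations.
-/

open Ideal Submodule

variable {R : Type*} [CommRing R]

/-- The linear map `(a₁,…,aₘ) ↦ Σ aⱼ zⱼ`. -/
noncomputable def sumMul {m : ℕ} (z : Fin m → R) : (Fin m → R) →ₗ[R] R :=
  ∑ j, (LinearMap.proj j : (Fin m → R) →ₗ[R] R).smulRight (z j)

/-- The degree-`d` cycles of the Koszul complex of the degree-one elements
`z₁t,…,zₘt` on the Rees algebra of `I`. -/
noncomputable def kosZ1 {m : ℕ} (I : Ideal R) (z : Fin m → R) (d : ℕ) :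
    Submodule R (Fin m → R) :=
  (⨅ j : Fin m, Submodule.comap (LinearMap.proj j) ((I ^ (d - 1) : Ideal R) : Submodule R R))
    ⊓ LinearMap.ker (sumMul z)

/-- The degree-`d` boundaries of the Koszul complex of `z₁t,…,zₘt` on the Rees algebra
of `I`. -/
noncomputable def kosB1 {m : ℕ} (I : Ideal R) (z : Fin m → R) (d : ℕ) :
    Submodule R (Fin m → R) :=
  Submodule.span R {v | ∃ j l : Fin m, ∃ u ∈ I ^ (d - 2),
    v = Pi.single l (z j * u) - Pi.single j (z l * u)}

/-- The degree-`d` component of the first Koszul homology `H₁(z₁t,…,zₘt; R(I))`;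
for the full sequence of generators of `I` this computes the `d`-th module of effective
relations `E(I)_d`. -/
noncomputable abbrev kosH1 {m : ℕ} (I : Ideal R) (z : Fin m → R) (d : ℕ) :=
  ↥(kosZ1 I z d) ⧸ (Submodule.comap (kosZ1 I z d).subtype (kosB1 I z d))

/-- The reduction number of `I` with respect to `J`. -/
noncomputable def reductionNumber (J I : Ideal R) : ℕ :=
  sInf {r | I ^ (r + 1) = J * I ^ r}

/-- The relation type of `I`, computed through the vanishing of the modules of effective
relations: the smallest `L ≥ 1` such that `E(I)_d = H₁(z₁t,…,zₘt; R(I))_d = 0` for all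
`d ≥ L + 1`, where `z` is a system of generators of `I`. -/
noncomputable def relationTypeKoszul {m : ℕ} (I : Ideal R) (z : Fin m → R) : ℕ :=
  sInf {L | 1 ≤ L ∧ ∀ d : ℕ, L + 1 ≤ d → kosZ1 I z d ≤ kosB1 I z d}

open MvPolynomial

section Koszul

variable {m : ℕ}

theorem sumMul_apply (z a : Fin m → R) : sumMul z a = ∑ j, a j * z j := by
  simp [sumMul]

def koszulRel (z : Fin m → R) (j l : Fin m) : Fin m → R :=
  Pi.single l (z j) - Pi.single j (z l)

theorem sumMul_koszulRel (z : Fin m → R) (j l : Fin m) :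
    sumMul z (koszulRel z j l) = 0 := by
  simp only [sumMul_apply, koszulRel, Pi.sub_apply, sub_mul, Finset.sum_sub_distrib,
    Pi.single_apply, ite_mul, zero_mul, Finset.sum_ite_eq', Finset.mem_univ, if_true]
  ring

theorem X_dvd_sub_aeval_update_zero {σ : Type*} [DecidableEq σ] (i : σ)
    (p : MvPolynomial σ R) : X i ∣ p - aeval (Function.update X i 0) p := by
  induction p using MvPolynomial.induction_on with
  | C a => simp
  | add p q hp hq => simpa [map_add, add_sub_add_comm] using dvd_add hp hq
  | mul_X p n hp =>
    set σ₀ := aeval (R := R) (Function.update X i (0 : MvPolynomial σ R))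
    have hX : X i ∣ X n - σ₀ (X n) := by
      by_cases hn : n = i
      · subst hn; simp [σ₀]
      · simp [σ₀, Function.update_of_ne hn]
    have key : p * X n - σ₀ (p * X n) = (p - σ₀ p) * X n + σ₀ p * (X n - σ₀ (X n)) := by
      rw [map_mul]; ring
    rw [key]
    exact dvd_add (dvd_mul_of_dvd_left hp _) (dvd_mul_of_dvd_right hX _)

theorem mem_span_koszulRel_of_sumMul_X_eq_zero {H : Fin m → MvPolynomial (Fin m) R}
    (hH : sumMul X H = 0) :
    H ∈ Submodule.span (MvPolynomial (Fin m) R)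
      (Set.range (Function.uncurry (koszulRel (X (R := R))))) := by
  set K := Submodule.span (MvPolynomial (Fin m) R)
    (Set.range (Function.uncurry (koszulRel (X (σ := Fin m) (R := R)))))
  -- Induction on the number `k` of possibly nonzero entries: subtracting Koszul relations
  -- reduces the others modulo `Xₖ`, and then `Xₖ Hₖ = 0`.
  suffices ∀ k : ℕ, ∀ H : Fin m → MvPolynomial (Fin m) R,
      (∀ l : Fin m, k ≤ l → H l = 0) → sumMul X H = 0 → H ∈ K from
    this m H (fun l hl => absurd l.isLt (by omega)) hH
  intro k
  induction k with
  | zero =>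
    intro H hH0 _
    rw [show H = 0 from funext fun l => hH0 l (Nat.zero_le _)]
    exact K.zero_mem
  | succ k ih =>
    intro H hH0 hH
    by_cases hk : m ≤ k
    · exact ih H (fun l hl => absurd l.isLt (by omega)) hH
    set i : Fin m := ⟨k, by omega⟩
    set σ₀ := aeval (R := R) (Function.update X i (0 : MvPolynomial (Fin m) R))
    choose q hq using fun l => X_dvd_sub_aeval_update_zero i (H l)
    set H' := H - ∑ j, q j • koszulRel X i j
    have hK : ∑ j, q j • koszulRel X i j ∈ K :=
      K.sum_mem fun j _ => K.smul_mem _ (Submodule.subset_span ⟨(i, j), rfl⟩)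
    have hH'_ne : ∀ l, l ≠ i → H' l = σ₀ (H l) := by
      intro l hl
      simp only [H', koszulRel, Pi.sub_apply, Finset.sum_apply, Pi.smul_apply, Pi.single_apply,
        smul_eq_mul, hl, if_false, sub_zero, mul_ite, mul_zero, Finset.sum_ite_eq, Finset.mem_univ,
        if_true]
      rw [mul_comm, ← hq l, sub_sub_cancel]
    have hH'_sum : sumMul X H' = 0 := by
      simp [H', map_sub, map_sum, sumMul_koszulRel, hH]
    have hH'_i : H' i = 0 := by
      have h : H' i * X i = sumMul X H' - σ₀ (sumMul X H) := by
        rw [sumMul_apply, sumMul_apply, map_sum, ← Finset.sum_sub_distrib,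
          Finset.sum_eq_single i]
        · simp [σ₀]
        · intro l _ hl
          rw [hH'_ne l hl, map_mul]
          simp [σ₀, Function.update_of_ne hl]
        · simp
      rw [hH, hH'_sum, map_zero, sub_zero] at h
      exact isRegular_X.right.eq_iff.mp (h.trans (zero_mul _).symm)
    have : H' ∈ K := by
      refine ih H' (fun l hl => ?_) hH'_sum
      rcases eq_or_ne l i with rfl | hli
      · exact hH'_i
      · rw [hH'_ne l hli, hH0 l (by simp [i, Fin.ext_iff] at hli; omega), map_zero]
    simpa [H'] using K.add_mem this hK

theorem isHomogeneous_koszulRel_X (j l i : Fin m) :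
    (koszulRel (X (R := R)) j l i).IsHomogeneous 1 := by
  simp only [koszulRel, Pi.sub_apply, Pi.single_apply]
  refine IsHomogeneous.sub ?_ ?_ <;> split_ifs
  all_goals first | exact isHomogeneous_X R _ | exact isHomogeneous_zero _ _ _

theorem eval_koszulRel_X (z : Fin m → R) (j l i : Fin m) :
    eval z (koszulRel (X (R := R)) j l i) = koszulRel z j l i := by
  simp only [koszulRel, Pi.sub_apply, Pi.single_apply, map_sub]
  split_ifs <;> simp

end Koszul

section Graded

attribute [local instance] MvPolynomial.gradedAlgebra

variable {σ : Type*}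

theorem homogeneousComponent_mul_of_isHomogeneous {e d : ℕ} (hed : e ≤ d)
    {q : MvPolynomial σ R} (hq : q.IsHomogeneous e) (p : MvPolynomial σ R) :
    homogeneousComponent d (p * q) = homogeneousComponent (d - e) p * q := by
  rw [← decomposition.decompose'_apply, ← decomposition.decompose'_apply]
  exact DirectSum.coe_decompose_mul_of_right_mem_of_le (homogeneousSubmodule σ R)
    ((mem_homogeneousSubmodule _ _).mpr hq) hed

theorem homogeneousSubmodule_one_mul (e : ℕ) :
    homogeneousSubmodule σ R 1 * homogeneousSubmodule σ R e =
      homogeneousSubmodule σ R (e + 1) := by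
  rw [← homogeneousSubmodule_one_pow (σ := σ) (R := R) e, ← pow_succ',
    homogeneousSubmodule_one_pow]

variable {P : ℕ → Submodule R (MvPolynomial σ R)}

theorem homogeneousComponent_mul_mem
    (hP : ∀ e, P e ≤ homogeneousSubmodule σ R e)
    (hmul : ∀ e e', homogeneousSubmodule σ R e' * P e ≤ P (e' + e)) {e d : ℕ} (hed : e < d)
    {g : MvPolynomial σ R} (hg : g ∈ P e) (f : MvPolynomial σ R) :
    homogeneousComponent d (f * g) ∈ homogeneousSubmodule σ R 1 * P (d - 1) := by
  rw [homogeneousComponent_mul_of_isHomogeneous hed.le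
    ((mem_homogeneousSubmodule _ _).mp (hP e hg))]
  have hf : homogeneousComponent (d - e) f ∈
      homogeneousSubmodule σ R 1 * homogeneousSubmodule σ R (d - e - 1) := by
    rw [homogeneousSubmodule_one_mul, Nat.sub_add_cancel (by omega)]
    exact homogeneousComponent_mem _ _
  have hle := mul_le_mul_right (hmul e (d - e - 1)) (homogeneousSubmodule σ R 1)
  rw [show d - e - 1 + e = d - 1 by omega, ← mul_assoc] at hle
  exact hle (Submodule.mul_mem_mul hf hg)

theorem mem_homogeneousSubmodule_one_mul_of_mem_span
    (hP : ∀ e, P e ≤ homogeneousSubmodule σ R e)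
    (hmul : ∀ e e', homogeneousSubmodule σ R e' * P e ≤ P (e' + e)) {N d : ℕ} (hNd : N < d)
    {F : MvPolynomial σ R} (hF : F ∈ homogeneousSubmodule σ R d)
    (hFK : F ∈ Ideal.span (⋃ e ≤ N, (P e : Set (MvPolynomial σ R)))) :
    F ∈ homogeneousSubmodule σ R 1 * P (d - 1) := by
  rw [← homogeneousComponent_eq_self ((mem_homogeneousSubmodule _ _).mp hF)]
  obtain ⟨k, c, g, rfl⟩ := Submodule.mem_span_set'.mp hFK
  rw [map_sum]
  refine Submodule.sum_mem _ fun i _ => ?_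
  obtain ⟨e, he, hg⟩ := Set.mem_iUnion₂.mp (g i).2
  exact homogeneousComponent_mul_mem hP hmul (by omega) hg (c i)

theorem exists_le_homogeneousSubmodule_one_mul [Finite σ] [IsNoetherianRing R]
    (hP : ∀ e, P e ≤ homogeneousSubmodule σ R e)
    (hmul : ∀ e e', homogeneousSubmodule σ R e' * P e ≤ P (e' + e)) :
    ∃ N, ∀ d, N < d → P d ≤ homogeneousSubmodule σ R 1 * P (d - 1) := by
  let K : ℕ →o Ideal (MvPolynomial σ R) :=
    ⟨fun N => Ideal.span (⋃ e ≤ N, (P e : Set (MvPolynomial σ R))), fun N N' h =>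
      Ideal.span_mono (Set.iUnion₂_mono' fun e he => ⟨e, he.trans h, subset_rfl⟩)⟩
  obtain ⟨N, hN⟩ := monotone_stabilizes_iff_noetherian.mpr inferInstance K
  refine ⟨N, fun d hd F hF =>
    mem_homogeneousSubmodule_one_mul_of_mem_span hP hmul hd (hP d hF) ?_⟩
  change F ∈ K N
  rw [hN d hd.le]
  exact Ideal.subset_span (Set.mem_iUnion₂.mpr ⟨d, le_rfl, hF⟩)

end Graded

section RelationType

variable {m : ℕ}

theorem mem_kosZ1_iff {I : Ideal R} {z v : Fin m → R} {d : ℕ} :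
    v ∈ kosZ1 I z d ↔ (∀ j, v j ∈ I ^ (d - 1)) ∧ sumMul z v = 0 := by
  simp [kosZ1]

theorem smul_koszulRel_mem_kosB1 {I : Ideal R} {z : Fin m → R} {d : ℕ} {u : R}
    (hu : u ∈ I ^ (d - 2)) (j l : Fin m) : u • koszulRel z j l ∈ kosB1 I z d :=
  Submodule.subset_span ⟨j, l, u, hu, by
    ext i
    simp only [koszulRel, Pi.smul_apply, Pi.sub_apply, Pi.single_apply, smul_eq_mul]
    split_ifs <;> ring⟩

theorem eval_mem_kosB1_of_mem_span_koszulRel {I : Ideal R} {z : Fin m → R}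
    (hzI : Ideal.span (Set.range z) = I) {d : ℕ} (hd : 2 ≤ d) {H : Fin m → MvPolynomial (Fin m) R}
    (hH : H ∈ Submodule.span (MvPolynomial (Fin m) R)
      (Set.range (Function.uncurry (koszulRel (X (R := R))))))
    (hHd : ∀ i, (H i).IsHomogeneous (d - 1)) :
    (fun i => eval z (H i)) ∈ kosB1 I z d := by
  obtain ⟨c, hc⟩ := (Submodule.mem_span_range_iff_exists_fun _).mp hH
  -- Only the degree `d - 2` parts of the coefficients contribute in degree `d - 1`.
  have hv : (fun i => eval z (H i)) =
      ∑ p, eval z (homogeneousComponent (d - 2) (c p)) • koszulRel z p.1 p.2 := by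
    ext i
    rw [← homogeneousComponent_eq_self (hHd i), ← hc]
    simp only [Finset.sum_apply, Pi.smul_apply, smul_eq_mul, map_sum, Function.uncurry_def]
    refine Finset.sum_congr rfl fun p _ => ?_
    rw [homogeneousComponent_mul_of_isHomogeneous (show 1 ≤ d - 1 by omega)
      (isHomogeneous_koszulRel_X _ _ _), map_mul, eval_koszulRel_X, show d - 1 - 1 = d - 2 by omega]
  rw [hv]
  refine Submodule.sum_mem _ fun p _ => smul_koszulRel_mem_kosB1 ?_ _ _
  rw [← hzI, Ideal.mem_span_pow_iff_exists_isHomogeneous]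
  exact ⟨_, homogeneousComponent_isHomogeneous _ _, rfl⟩

/-- The degree-`e` component of the kernel of `R[X₀, …, Xₘ₋₁] → R[It]`, `Xⱼ ↦ zⱼ t`. -/
noncomputable def reesKernel (z : Fin m → R) (e : ℕ) : Submodule R (MvPolynomial (Fin m) R) :=
  homogeneousSubmodule (Fin m) R e ⊓ (RingHom.ker (eval z)).restrictScalars R

theorem homogeneousSubmodule_mul_reesKernel_le (z : Fin m → R) (e e' : ℕ) :
    homogeneousSubmodule (Fin m) R e' * reesKernel z e ≤ reesKernel z (e' + e) :=
  Submodule.mul_le.mpr fun a ha b hb =>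
    ⟨homogeneousSubmodule_mul e' e (Submodule.mul_mem_mul ha hb.1), by
      simpa using congrArg (eval z a * ·) hb.2⟩

theorem exists_sumMul_X_eq_of_mem_homogeneousSubmodule_one_mul
    {M : Submodule R (MvPolynomial (Fin m) R)} {F : MvPolynomial (Fin m) R}
    (hF : F ∈ homogeneousSubmodule (Fin m) R 1 * M) :
    ∃ G : Fin m → MvPolynomial (Fin m) R, (∀ j, G j ∈ M) ∧ sumMul X G = F := by
  refine Submodule.mul_induction_on hF (fun a ha b hb => ?_) ?_
  · rw [homogeneousSubmodule_one_eq_span_X] at ha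
    obtain ⟨c, rfl⟩ := (Submodule.mem_span_range_iff_exists_fun R).mp ha
    refine ⟨fun j => c j • b, fun j => M.smul_mem _ hb, ?_⟩
    simp only [sumMul_apply, smul_mul_assoc, Finset.sum_mul, mul_comm b]
  · rintro F F' hF hF'
    obtain ⟨G, hG, rfl⟩ := hF
    obtain ⟨G', hG', rfl⟩ := hF'
    exact ⟨G + G', fun j => M.add_mem (hG j) (hG' j), map_add _ _ _⟩

theorem exists_forall_lt_kosZ1_le_kosB1 [IsNoetherianRing R] {I : Ideal R} {z : Fin m → R}
    (hzI : Ideal.span (Set.range z) = I) :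
    ∃ N, ∀ d, N < d → kosZ1 I z d ≤ kosB1 I z d := by
  obtain ⟨N, hN⟩ := exists_le_homogeneousSubmodule_one_mul (P := reesKernel z)
    (fun _ => inf_le_left) (homogeneousSubmodule_mul_reesKernel_le z)
  refine ⟨max N 1, fun d hd v hv => ?_⟩
  obtain ⟨hvI, hvz⟩ := mem_kosZ1_iff.mp hv
  choose A hA hAv using fun j =>
    (Ideal.mem_span_pow_iff_exists_isHomogeneous z _).mp (hzI ▸ hvI j)
  have hF : sumMul X A ∈ reesKernel z d := by
    refine ⟨(mem_homogeneousSubmodule _ _).mpr ?_, ?_⟩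
    · rw [sumMul_apply, show d = d - 1 + 1 by omega]
      exact IsHomogeneous.sum _ _ _ fun j _ => (hA j).mul (isHomogeneous_X R j)
    · simp [sumMul_apply, hAv, ← hvz, mul_comm]
  obtain ⟨G, hG, hGA⟩ :=
    exists_sumMul_X_eq_of_mem_homogeneousSubmodule_one_mul (hN d (by omega) hF)
  have hsyz : sumMul X (A - G) = 0 := by rw [map_sub, hGA, sub_self]
  convert eval_mem_kosB1_of_mem_span_koszulRel hzI (by omega)
    (mem_span_koszulRel_of_sumMul_X_eq_zero hsyz) fun i => (hA i).sub (hG i).1 using 1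
  ext i
  simp [hAv, RingHom.mem_ker.mp (hG i).2]

theorem kosZ1_le_kosB1_of_relationTypeKoszul_lt [IsNoetherianRing R] {I : Ideal R}
    {z : Fin m → R} (hzI : Ideal.span (Set.range z) = I) {d : ℕ}
    (hd : relationTypeKoszul I z < d) : kosZ1 I z d ≤ kosB1 I z d := by
  obtain ⟨N, hN⟩ := exists_forall_lt_kosZ1_le_kosB1 hzI
  have hne : {L | 1 ≤ L ∧ ∀ d, L + 1 ≤ d → kosZ1 I z d ≤ kosB1 I z d}.Nonempty :=
    ⟨max N 1, le_max_right _ _, fun d hd => hN d (by omega)⟩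
  exact (Nat.sInf_mem hne).2 d hd

end RelationType

section Descent

variable {n : ℕ} (g : Fin n → R) {f : R} {I : Ideal R}

theorem exists_sum_mul_eq_of_mem_span_range_mul {N : Ideal R} {x : R}
    (hx : x ∈ Ideal.span (Set.range g) * N) :
    ∃ b : Fin n → R, (∀ j, b j ∈ N) ∧ ∑ j, b j * g j = x := by
  rw [mul_comm, ← smul_eq_mul, Ideal.span, Submodule.mem_ideal_smul_span_iff_exists_sum] at hx
  obtain ⟨a, ha, rfl⟩ := hx
  exact ⟨a, ha, by simp [Finsupp.sum_fintype]⟩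

theorem last_mem_of_mem_kosB1 {d : ℕ} {v : Fin (n + 1) → R}
    (hv : v ∈ kosB1 I (Fin.snoc g f) d) :
    v (Fin.last n) ∈ Ideal.span (Set.range g) * I ^ (d - 2) := by
  have hg : ∀ i, i ≠ Fin.last n →
      (Fin.snoc g f : Fin (n + 1) → R) i ∈ Ideal.span (Set.range g) := by
    intro i hi
    obtain ⟨i, rfl⟩ := Fin.exists_castSucc_eq.mpr hi
    simpa using Ideal.subset_span (Set.mem_range_self i)
  induction hv using Submodule.span_induction with
  | mem w hw =>
    obtain ⟨j, l, u, hu, rfl⟩ := hw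
    simp only [Pi.sub_apply, Pi.single_apply]
    split_ifs with hl hj hj
    · rw [← hl, ← hj, sub_self]
      exact zero_mem _
    · rw [sub_zero]
      exact Ideal.mul_mem_mul (hg j (Ne.symm hj)) hu
    · rw [zero_sub, neg_mem_iff]
      exact Ideal.mul_mem_mul (hg l (Ne.symm hl)) hu
    · rw [sub_zero]
      exact zero_mem _
  | zero => exact zero_mem _
  | add _ _ _ _ h h' => exact add_mem h h'
  | smul a _ _ h => exact Ideal.mul_mem_left _ a h

theorem pow_pred_mem_of_kosZ1_le_kosB1 (hf : f ∈ I) {d : ℕ} (hd : 0 < d)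
    (hZB : kosZ1 I (Fin.snoc g f) d ≤ kosB1 I (Fin.snoc g f) d)
    (hfd : f ^ d ∈ Ideal.span (Set.range g) * I ^ (d - 1)) :
    f ^ (d - 1) ∈ Ideal.span (Set.range g) * I ^ (d - 2) := by
  obtain ⟨b, hb, hbg⟩ := exists_sum_mul_eq_of_mem_span_range_mul g hfd
  have hv : Fin.snoc b (-f ^ (d - 1)) ∈ kosZ1 I (Fin.snoc g f) d := by
    refine mem_kosZ1_iff.mpr ⟨fun j => ?_, ?_⟩
    · refine Fin.lastCases ?_ (fun i => ?_) j
      · simpa using Ideal.pow_mem_pow hf _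
      · simpa using hb i
    · rw [sumMul_apply, Fin.sum_univ_castSucc]
      simp only [Fin.snoc_castSucc, Fin.snoc_last, hbg, neg_mul, ← pow_succ,
        Nat.sub_add_cancel hd, add_neg_cancel]
  simpa using last_mem_of_mem_kosB1 g (hZB hv)

theorem pow_mem_of_forall_lt_kosZ1_le_kosB1 (hf : f ∈ I) {L : ℕ}
    (hZB : ∀ d, L < d → kosZ1 I (Fin.snoc g f) d ≤ kosB1 I (Fin.snoc g f) d) (k : ℕ)
    (hk : f ^ (L + k) ∈ Ideal.span (Set.range g) * I ^ (L + k - 1)) :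
    f ^ L ∈ Ideal.span (Set.range g) * I ^ (L - 1) := by
  induction k with
  | zero => exact hk
  | succ k ih =>
    apply ih
    have := pow_pred_mem_of_kosZ1_le_kosB1 g hf (d := L + k + 1) (by omega) (hZB _ (by omega)) hk
    rwa [show L + k + 1 - 2 = L + k - 1 by omega] at this

end Descent

theorem pow_succ_eq_mul_pow_of_le {J I : Ideal R} {r s : ℕ} (hr : I ^ (r + 1) = J * I ^ r)
    (hrs : r ≤ s) : I ^ (s + 1) = J * I ^ s := by
  induction s, hrs using Nat.le_induction with
  | base => exact hr
  | succ s _ ih =>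
    rw [pow_succ I (s + 1)]
    nth_rw 1 [ih]
    rw [mul_assoc, ← pow_succ]

theorem stmt18_general {R : Type*} [CommRing R] [IsNoetherianRing R]
    {n : ℕ} (g : Fin n → R) (f : R) (J I : Ideal R)
    (hJ : J = Ideal.span (Set.range g)) (hI : I = J ⊔ Ideal.span {f})
    (hred : ∃ r : ℕ, I ^ (r + 1) = J * I ^ r)
    (L : ℕ) (hL : relationTypeKoszul I (Fin.snoc g f : Fin (n + 1) → R) = L) :
    f ^ L ∈ J * I ^ (L - 1) := by
  subst hJ
  obtain ⟨r, hr⟩ := hred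
  have hzI : Ideal.span (Set.range (Fin.snoc g f)) = I := by
    rw [Fin.range_snoc, Ideal.span_insert, hI, sup_comm]
  have hf : f ∈ I := hI ▸ Ideal.mem_sup_right (Ideal.mem_span_singleton_self f)
  refine pow_mem_of_forall_lt_kosZ1_le_kosB1 g hf
    (fun d hd => kosZ1_le_kosB1_of_relationTypeKoszul_lt hzI (hL ▸ hd)) (r + 1) ?_
  rw [show L + (r + 1) - 1 = L + r by omega,
    ← pow_succ_eq_mul_pow_of_le hr (Nat.le_add_left r L)]
  exact Ideal.pow_mem_pow hf _

theorem stmt18 {R : Type*} [CommRing R] [IsNoetherianRing R] [IsLocalRing R]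
    {n : ℕ} (hn : 2 ≤ n) (g : Fin n → R) (f : R) (J I : Ideal R)
    (hJ : J = Ideal.span (Set.range g)) (hI : I = J ⊔ Ideal.span {f})
    (hred : ∃ r : ℕ, I ^ (r + 1) = J * I ^ r)
    (L : ℕ) (hL : relationTypeKoszul I (Fin.snoc g f : Fin (n + 1) → R) = L) :
    f ^ L ∈ J * I ^ (L - 1) :=
  stmt18_general g f J I hJ hI hred L hL
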